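/- arXiv:0804.0407 — 2 statements merged into one kernel-verified Lean document; each statement's English description precedes it below -/
import Mathlib

section
/- Fix H \in (1/2,1) and t > 0. Then \lim_{\mu \to +\infty} \mu^{2H}\, e^{-2\mu t} \int_0^t\int_0^t e^{\mu(s_1+s_2)}\,|s_1-s_2|^{2H-2}\,ds_1\,ds_2 = \Gamma(2H-1), where \Gamma is the Gamma function. -/
/-!
Substituting `s = t - x / μ` turns the expression into `J(μ t)`, where
`J(T) = ∫₀ᵀ ∫₀ᵀ e^{-(x+y)} |x - y|^r dy dx` and `r = 2H - 2 > -1`. Splitting the inner integral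
at `y = x` gives `J(T) = ∫₀ᵀ e^{-2x} (K(x) + G(T - x)) dx` with `G(T) = ∫₀ᵀ e^{-u} u^r du` and
`K(T) = ∫₀ᵀ e^{u} u^r du`, and integrating by parts twice yields `J(T) = G(T) - e^{-2T} K(T)`.
As `T → ∞`, `G(T) → Γ(r + 1)` while `e^{-2T} K(T) ≤ e^{-T} T^{r+1} / (r + 1) → 0`.
-/

open Filter intervalIntegral MeasureTheory Set Topology Real

theorem intervalIntegrable_abs_rpow {r : ℝ} (hr : -1 < r) (a b : ℝ) :
    IntervalIntegrable (fun u : ℝ => |u| ^ r) volume a b := by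
  have from_zero_of_nonneg : ∀ c, 0 ≤ c → IntervalIntegrable (fun u : ℝ => |u| ^ r) volume 0 c :=
    fun c hc => (intervalIntegrable_rpow' hr).congr_uIoo fun u hu => by
      rw [uIoo_of_le hc] at hu
      simp only [abs_of_pos hu.1]
  have from_zero : ∀ c, IntervalIntegrable (fun u : ℝ => |u| ^ r) volume 0 c := by
    intro c
    rcases le_total 0 c with hc | hc
    · exact from_zero_of_nonneg c hc
    · simpa using
        (IntervalIntegrable.iff_comp_neg (by simp)).1 (from_zero_of_nonneg (-c) (by linarith))
  exact (from_zero a).symm.trans (from_zero b)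

/-- For `c = -1` and `T ≥ 0` this is the lower incomplete gamma function `γ(r + 1, T)`. -/
noncomputable def expAbsRpowIntegral (c r T : ℝ) : ℝ :=
  ∫ u in (0 : ℝ)..T, exp (c * u) * |u| ^ r

namespace expAbsRpowIntegral

variable {c r : ℝ}

theorem intervalIntegrable_integrand (hr : -1 < r) (c a b : ℝ) :
    IntervalIntegrable (fun u => exp (c * u) * |u| ^ r) volume a b :=
  (intervalIntegrable_abs_rpow hr a b).continuousOn_mul (by fun_prop)

@[simp] theorem zero_right : expAbsRpowIntegral c r 0 = 0 := integral_same

theorem continuous (hr : -1 < r) : Continuous (expAbsRpowIntegral c r) :=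
  continuous_primitive (intervalIntegrable_integrand hr c) 0

theorem hasDerivAt (hr : -1 < r) {x : ℝ} (hx : x ≠ 0) :
    HasDerivAt (expAbsRpowIntegral c r) (exp (c * x) * |x| ^ r) x :=
  integral_hasDerivAt_right (intervalIntegrable_integrand hr c 0 x)
    (StronglyMeasurable.stronglyMeasurableAtFilter (by fun_prop))
    (by fun_prop (disch := exact Or.inl (abs_ne_zero.2 hx)))

theorem integral_exp_mul_self (hr : -1 < r) {a : ℝ} (ha : a ≠ 0) (T : ℝ) :
    ∫ x in (0 : ℝ)..T, exp (a * x) * expAbsRpowIntegral c r x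
      = (exp (a * T) * expAbsRpowIntegral c r T - expAbsRpowIntegral (c + a) r T) / a := by
  have hv : ∀ x, HasDerivAt (fun x => exp (a * x) / a) (exp (a * x)) x := fun x => by
    simpa [ha] using (((hasDerivAt_id x).const_mul a).exp).div_const a
  have hne : ∀ x ∈ Ioo (min 0 T) (max 0 T), x ≠ 0 := by
    rintro x hx rfl
    simp only [mem_Ioo, min_lt_iff, lt_max_iff, lt_self_iff_false, false_or] at hx
    linarith [hx.1, hx.2]
  have parts := integral_mul_deriv_eq_deriv_mul_of_hasDerivAt
    (continuous hr).continuousOn (by fun_prop) (fun x hx => hasDerivAt hr (hne x hx))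
    (fun x _ => hv x) (intervalIntegrable_integrand hr c 0 T)
    (Continuous.intervalIntegrable (by fun_prop) 0 T)
  have hcombine : ∀ x, exp (c * x) * |x| ^ r * (exp (a * x) / a)
      = a⁻¹ * (exp ((c + a) * x) * |x| ^ r) := fun x => by
    rw [add_mul, exp_add]; ring
  simp only [hcombine, intervalIntegral.integral_const_mul, zero_right, zero_mul, sub_zero]
    at parts
  simp only [mul_comm (exp _)]
  rw [parts, show ∫ x in (0 : ℝ)..T, exp ((c + a) * x) * |x| ^ r
    = expAbsRpowIntegral (c + a) r T from rfl]
  ring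

theorem tendsto_Gamma (hr : -1 < r) :
    Tendsto (expAbsRpowIntegral (-1) r) atTop (𝓝 (Gamma (r + 1))) := by
  have hGamma : EqOn (fun u => exp (-u) * u ^ (r + 1 - 1)) (fun u => exp (-1 * u) * |u| ^ r)
      (Ioi 0) := fun u hu => by
    simp only [add_sub_cancel_right, neg_one_mul, abs_of_pos (mem_Ioi.1 hu)]
  have hint := (GammaIntegral_convergent (by linarith : 0 < r + 1)).congr_fun hGamma
    measurableSet_Ioi
  rw [Gamma_eq_integral (by linarith), setIntegral_congr_fun measurableSet_Ioi hGamma]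
  exact intervalIntegral_tendsto_integral_Ioi 0 hint tendsto_id

theorem le_exp_mul_rpow_div (hr : -1 < r) (hc : 0 ≤ c) {T : ℝ} (hT : 0 ≤ T) :
    expAbsRpowIntegral c r T ≤ exp (c * T) * (T ^ (r + 1) / (r + 1)) := by
  have hpow : ∫ u in (0 : ℝ)..T, |u| ^ r = T ^ (r + 1) / (r + 1) := by
    rw [integral_congr (g := fun u => u ^ r) fun u hu => by
        rw [uIcc_of_le hT] at hu; simp only [abs_of_nonneg hu.1],
      integral_rpow (Or.inl hr), zero_rpow (by linarith), sub_zero]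
  rw [← hpow, ← intervalIntegral.integral_const_mul]
  refine integral_mono_on hT (intervalIntegrable_integrand hr c 0 T)
    ((intervalIntegrable_abs_rpow hr 0 T).const_mul _) fun u hu => ?_
  gcongr
  exact hu.2

theorem tendsto_exp_neg_mul_mul_nhds_zero (hr : -1 < r) (hc : 0 ≤ c) {a : ℝ} (hca : c < a) :
    Tendsto (fun T => exp (-a * T) * expAbsRpowIntegral c r T) atTop (𝓝 0) := by
  have hlim := (tendsto_rpow_mul_exp_neg_mul_atTop_nhds_zero (r + 1) (a - c)
    (sub_pos.2 hca)).div_const (r + 1)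
  rw [zero_div] at hlim
  refine squeeze_zero' ?_ ?_ hlim
  · filter_upwards [eventually_ge_atTop 0] with T hT
    exact mul_nonneg (exp_pos _).le (integral_nonneg hT fun u _ => by positivity)
  · filter_upwards [eventually_ge_atTop 0] with T hT
    calc exp (-a * T) * expAbsRpowIntegral c r T
        ≤ exp (-a * T) * (exp (c * T) * (T ^ (r + 1) / (r + 1))) := by
          gcongr; exact le_exp_mul_rpow_div hr hc hT
      _ = T ^ (r + 1) * exp (-(a - c) * T) / (r + 1) := by
          rw [mul_left_comm, ← mul_assoc, ← exp_add]; ring_nf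

end expAbsRpowIntegral

open expAbsRpowIntegral in
theorem integral_exp_neg_add_mul_abs_sub_rpow {r : ℝ} (hr : -1 < r) (x T : ℝ) :
    ∫ y in (0 : ℝ)..T, exp (-(x + y)) * |x - y| ^ r
      = exp (-2 * x) * (expAbsRpowIntegral 1 r x + expAbsRpowIntegral (-1) r (T - x)) := by
  have hint : ∀ a b, IntervalIntegrable (fun y => exp (-(x + y)) * |x - y| ^ r) volume a b :=
    fun a b => IntervalIntegrable.continuousOn_mul
      (by simpa using (intervalIntegrable_abs_rpow hr (x - a) (x - b)).comp_sub_left x)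
      (by fun_prop)
  have below : ∀ y, exp (-(x + y)) * |x - y| ^ r
      = exp (-2 * x) * (exp (1 * (x - y)) * |x - y| ^ r) := fun y => by
    rw [← mul_assoc, ← exp_add]; ring_nf
  have above : ∀ y, exp (-(x + y)) * |x - y| ^ r
      = exp (-2 * x) * (exp (-1 * (y - x)) * |y - x| ^ r) := fun y => by
    rw [abs_sub_comm, ← mul_assoc, ← exp_add]; ring_nf
  rw [← integral_add_adjacent_intervals (hint 0 x) (hint x T), mul_add]
  congr 1
  · simp only [below, intervalIntegral.integral_const_mul]
    rw [intervalIntegral.integral_comp_sub_left (fun u => exp (1 * u) * |u| ^ r), sub_self,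
      sub_zero]
    rfl
  · simp only [above, intervalIntegral.integral_const_mul]
    rw [intervalIntegral.integral_comp_sub_right (fun u => exp (-1 * u) * |u| ^ r), sub_self]
    rfl

open expAbsRpowIntegral in
theorem integral_integral_exp_neg_add_mul_abs_sub_rpow {r : ℝ} (hr : -1 < r) (T : ℝ) :
    ∫ x in (0 : ℝ)..T, ∫ y in (0 : ℝ)..T, exp (-(x + y)) * |x - y| ^ r
      = expAbsRpowIntegral (-1) r T - exp (-2 * T) * expAbsRpowIntegral 1 r T := by
  have reflected : ∫ x in (0 : ℝ)..T, exp (-2 * x) * expAbsRpowIntegral (-1) r (T - x)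
      = exp (-2 * T) * ∫ x in (0 : ℝ)..T, exp (2 * x) * expAbsRpowIntegral (-1) r x := by
    have hsub := intervalIntegral.integral_comp_sub_left (a := 0) (b := T)
      (fun u => exp (-2 * T) * (exp (2 * u) * expAbsRpowIntegral (-1) r u)) T
    rw [sub_self, sub_zero] at hsub
    rw [← intervalIntegral.integral_const_mul, ← hsub]
    congr 1 with x
    rw [← mul_assoc, ← exp_add]
    ring_nf
  have hE (c : ℝ) : Continuous (expAbsRpowIntegral c r) := continuous hr
  simp only [integral_exp_neg_add_mul_abs_sub_rpow hr, mul_add]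
  rw [integral_add (Continuous.intervalIntegrable (by fun_prop) _ _)
    (Continuous.intervalIntegrable (by fun_prop) _ _), reflected,
    integral_exp_mul_self hr (by norm_num), integral_exp_mul_self hr (by norm_num)]
  have hexp : exp (-2 * T) * exp (2 * T) = 1 := by rw [← exp_add]; simp
  rw [show (1 : ℝ) + -2 = -1 by norm_num, show (-1 : ℝ) + 2 = 1 by norm_num]
  linear_combination expAbsRpowIntegral (-1) r T / 2 * hexp

open expAbsRpowIntegral in
theorem tendsto_integral_integral_exp_neg_add_mul_abs_sub_rpow {r : ℝ} (hr : -1 < r) :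
    Tendsto (fun T => ∫ x in (0 : ℝ)..T, ∫ y in (0 : ℝ)..T, exp (-(x + y)) * |x - y| ^ r)
      atTop (𝓝 (Gamma (r + 1))) := by
  simp only [integral_integral_exp_neg_add_mul_abs_sub_rpow hr]
  simpa using
    (tendsto_Gamma hr).sub (tendsto_exp_neg_mul_mul_nhds_zero hr zero_le_one one_lt_two)

theorem integral_integral_comp_sub_mul {E : Type*} [NormedAddCommGroup E] [NormedSpace ℝ E]
    (f : ℝ → ℝ → E) {c : ℝ} (hc : c ≠ 0) (t : ℝ) :
    ∫ s₁ in (0 : ℝ)..t, ∫ s₂ in (0 : ℝ)..t, f (c * t - c * s₁) (c * t - c * s₂)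
      = (c⁻¹ * c⁻¹) • ∫ x in (0 : ℝ)..c * t, ∫ y in (0 : ℝ)..c * t, f x y := by
  simp only [intervalIntegral.integral_comp_sub_mul (f _) hc, intervalIntegral.integral_smul,
    mul_zero, sub_zero, sub_self]
  rw [intervalIntegral.integral_comp_sub_mul (fun u => ∫ y in (0 : ℝ)..c * t, f u y) hc,
    sub_self, mul_zero, sub_zero, mul_smul]

theorem rpow_mul_exp_mul_integral_integral_exp_mul_add_mul_abs_sub_rpow {μ : ℝ} (hμ : 0 < μ)
    (r t : ℝ) :
    μ ^ (r + 2) * exp (-2 * μ * t) *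
        ∫ s₁ in (0 : ℝ)..t, ∫ s₂ in (0 : ℝ)..t, exp (μ * (s₁ + s₂)) * |s₁ - s₂| ^ r
      = ∫ x in (0 : ℝ)..μ * t, ∫ y in (0 : ℝ)..μ * t, exp (-(x + y)) * |x - y| ^ r := by
  have hμr : μ ^ r ≠ 0 := (rpow_pos_of_pos hμ r).ne'
  have pointwise : ∀ s₁ s₂, exp (μ * (s₁ + s₂)) * |s₁ - s₂| ^ r
      = exp (2 * μ * t) * μ ^ (-r) * (exp (-((μ * t - μ * s₁) + (μ * t - μ * s₂)))
        * |(μ * t - μ * s₁) - (μ * t - μ * s₂)| ^ r) := fun s₁ s₂ => by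
    rw [show (μ * t - μ * s₁) - (μ * t - μ * s₂) = μ * (s₂ - s₁) by ring, abs_mul, abs_of_pos hμ,
      mul_rpow hμ.le (abs_nonneg _), abs_sub_comm, rpow_neg hμ.le]
    have hexp : exp (2 * μ * t) * exp (-((μ * t - μ * s₁) + (μ * t - μ * s₂)))
        = exp (μ * (s₁ + s₂)) := by rw [← exp_add]; ring_nf
    rw [← hexp]
    field_simp
  have hsub := integral_integral_comp_sub_mul (fun x y => exp (-(x + y)) * |x - y| ^ r) hμ.ne' t
  simp only [pointwise, intervalIntegral.integral_const_mul, hsub, smul_eq_mul]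
  rw [rpow_add hμ, rpow_two, rpow_neg hμ.le]
  field_simp
  rw [← exp_add, neg_add_cancel, exp_zero, one_mul]

theorem fOU_variance_asymptotics_general (H t : ℝ) (hH1 : 1 / 2 < H) (ht : 0 < t) :
    Tendsto
      (fun μ : ℝ => μ ^ (2 * H) * Real.exp (-2 * μ * t) *
        ∫ s₁ in (0 : ℝ)..t, ∫ s₂ in (0 : ℝ)..t,
          Real.exp (μ * (s₁ + s₂)) * |s₁ - s₂| ^ (2 * H - 2))
      atTop (nhds (Real.Gamma (2 * H - 1))) := by
  have hlim := (tendsto_integral_integral_exp_neg_add_mul_abs_sub_rpow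
    (by linarith : -1 < 2 * H - 2)).comp (tendsto_id.atTop_mul_const ht)
  rw [show 2 * H - 2 + 1 = 2 * H - 1 by ring] at hlim
  refine hlim.congr' ?_
  filter_upwards [eventually_gt_atTop 0] with μ hμ
  have hscale := rpow_mul_exp_mul_integral_integral_exp_mul_add_mul_abs_sub_rpow hμ (2 * H - 2) t
  rw [sub_add_cancel] at hscale
  simp only [Function.comp_apply, id, hscale]

/-- For `H ∈ (1/2,1)` and `t > 0`,
`μ^{2H} e^{-2μt} ∫_0^t ∫_0^t e^{μ(s₁+s₂)} |s₁-s₂|^{2H-2} ds₁ ds₂ → Γ(2H-1)` as `μ → +∞`. -/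
theorem fOU_variance_asymptotics (H t : ℝ) (hH1 : 1 / 2 < H) (hH2 : H < 1) (ht : 0 < t) :
    Tendsto
      (fun μ : ℝ => μ ^ (2 * H) * Real.exp (-2 * μ * t) *
        ∫ s₁ in (0 : ℝ)..t, ∫ s₂ in (0 : ℝ)..t,
          Real.exp (μ * (s₁ + s₂)) * |s₁ - s₂| ^ (2 * H - 2))
      atTop (nhds (Real.Gamma (2 * H - 1))) :=
  fOU_variance_asymptotics_general H t hH1 ht
end

section
/- Fix H \in [1/2, 1) and T > 0. For p > -1 and x > 0 let I_p(x) = \sum_{k=0}^{\infty} (x/2)^{2k+p} / (k!\,\Gamma(k+p+1)). Then \lim_{\mu \to +\infty} \mu \cdot \dfrac{2 + 2e^{\mu T}(1-\mu T) - \dfrac{\pi \mu T}{\sin(\pi H)}\, I_{H-1}\!\left(\tfrac{\mu T}{2}\right) I_{-H}\!\left(\tfrac{\mu T}{2}\right)}{4\,\mu^{2}\, e^{\mu T}} = -\dfrac{T}{2}. -/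
open Filter

/-- The modified Bessel function of the first kind of order `p`, defined by its
convergent power series (for `x > 0`, `p > -1`). -/
noncomputable def besselI (p x : ℝ) : ℝ :=
  ∑' k : ℕ, (x / 2) ^ (2 * (k : ℝ) + p) / ((k.factorial : ℝ) * Real.Gamma ((k : ℝ) + p + 1))

/-!
Write `I_p(x) = (x/2)^p R_p(x)` with `R_p(x) = ∑ (x/2)^{2k} / (k! Γ(k+p+1))`, so that
`I_{H-1}(x) I_{-H}(x) = (2/x) R_{H-1}(x) R_{-H}(x)`. With `x = μT/2` the expression equals
`(1 + e^{-μT})/(2μ) - T/2 - (πT / (4 sin πH)) I_{H-1}(x) I_{-H}(x) e^{-2x}`,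
so it suffices that `I_{H-1}(x) I_{-H}(x) = o(e^{2x})`.

Since `(2k)! / (4^k k!) = Γ(k+1/2)/Γ(1/2)` and `Γ(k+a)/Γ(a)` increases with `a`, the
coefficients of `R_p` are dominated by those of `cosh / Γ(p+1)` when `p ≥ -1/2`; this bounds
`R_{H-1}`.
That bound is too weak for `R_{-H}`: there `Γ(k+p+2) ≥ k! Γ(p+2)`, the Wallis-type bound
`(2m+1) binom(2m,m)^2 ≤ 16^m` and AM-GM give `R_p(x) ≤ 1/Γ(p+1) + √x e^x / (4 Γ(p+2))`.
Altogether `I_{H-1}(x) I_{-H}(x) e^{-2x} = O(e^{-x}/x + 1/√x)`.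
-/

open Real Nat Topology

theorem Nat.two_mul_add_one_mul_centralBinom_sq_le (n : ℕ) :
    (2 * n + 1) * centralBinom n ^ 2 ≤ 16 ^ n := by
  induction n with
  | zero => simp
  | succ n ih =>
    refine Nat.le_of_mul_le_mul_left ?_ (show 0 < (n + 1) ^ 2 by positivity)
    calc (n + 1) ^ 2 * ((2 * (n + 1) + 1) * centralBinom (n + 1) ^ 2)
        = (2 * n + 3) * ((n + 1) * centralBinom (n + 1)) ^ 2 := by ring
      _ = 4 * (2 * n + 1) * (2 * n + 3) * ((2 * n + 1) * centralBinom n ^ 2) := by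
          rw [succ_mul_centralBinom_succ]; ring
      _ ≤ 4 * (2 * n + 1) * (2 * n + 3) * 16 ^ n := by gcongr
      _ ≤ 16 * (n + 1) ^ 2 * 16 ^ n := Nat.mul_le_mul_right _ (by nlinarith)
      _ = (n + 1) ^ 2 * 16 ^ (n + 1) := by ring

namespace Real

theorem Gamma_nat_add_mul_Gamma_le {a b : ℝ} (ha : 0 < a) (hab : a ≤ b) (k : ℕ) :
    Gamma (k + a) * Gamma b ≤ Gamma (k + b) * Gamma a := by
  induction k with
  | zero => simp [mul_comm]
  | succ k ih =>
    have hka : 0 < k + a := by positivity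
    have hkb : 0 < k + b := by linarith
    rw [Nat.cast_succ, add_right_comm, add_right_comm _ 1 b, Gamma_add_one hka.ne',
      Gamma_add_one hkb.ne', mul_assoc, mul_assoc]
    exact mul_le_mul (by linarith) ih
      (mul_pos (Gamma_pos_of_pos hka) (Gamma_pos_of_pos (ha.trans_le hab))).le hkb.le

theorem Gamma_nat_add_half_mul (k : ℕ) :
    Gamma (k + 1 / 2) * (4 ^ k * k !) = (2 * k)! * √π := by
  induction k with
  | zero => simp [-one_div, Gamma_one_half_eq]
  | succ k ih =>
    rw [Nat.cast_succ, add_right_comm, Gamma_add_one (by positivity),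
      show 2 * (k + 1) = 2 * k + 1 + 1 by ring, factorial_succ, factorial_succ, factorial_succ]
    push_cast
    linear_combination (4 * (k + 1 / 2) * (k + 1)) * ih

theorem factorial_two_mul_mul_Gamma_le {p : ℝ} (hp : -1 / 2 ≤ p) (k : ℕ) :
    (2 * k)! * Gamma (p + 1) ≤ 4 ^ k * k ! * Gamma (k + p + 1) := by
  have h := Gamma_nat_add_mul_Gamma_le (a := 1 / 2) (b := p + 1) one_half_pos (by linarith) k
  rw [Gamma_one_half_eq, ← add_assoc] at h
  refine le_of_mul_le_mul_right ?_ (sqrt_pos.2 pi_pos)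
  calc (2 * k)! * Gamma (p + 1) * √π = Gamma (k + 1 / 2) * Gamma (p + 1) * (4 ^ k * k !) := by
        rw [mul_right_comm, ← Gamma_nat_add_half_mul]; ring
    _ ≤ Gamma (k + p + 1) * √π * (4 ^ k * k !) := by gcongr
    _ = _ := by ring

theorem factorial_mul_Gamma_le {p : ℝ} (hp : -1 < p) (k : ℕ) :
    k ! * Gamma (p + 2) ≤ Gamma (k + p + 2) := by
  have h := Gamma_nat_add_mul_Gamma_le (a := 1) (b := p + 2) one_pos (by linarith) k
  rwa [Gamma_nat_eq_factorial, Gamma_one, mul_one, ← add_assoc] at h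

theorem Gamma_nat_add_add_one_pos {p : ℝ} (hp : -1 < p) (k : ℕ) : 0 < Gamma (k + p + 1) :=
  Gamma_pos_of_pos (by linarith [k.cast_nonneg (α := ℝ)])

theorem hasSum_pow_div_factorial_odd_add_even_succ (x : ℝ) :
    HasSum (fun k : ℕ ↦ x ^ (2 * k + 1) / (2 * k + 1)! + x ^ (2 * (k + 1)) / (2 * (k + 1))!)
      (exp x - 1) := by
  have hcosh := (hasSum_nat_add_iff' 1).2 (hasSum_cosh x)
  simp only [Finset.range_one, Finset.sum_singleton, mul_zero, pow_zero, factorial_zero,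
    cast_one, div_one] at hcosh
  rw [← cosh_add_sinh, add_sub_right_comm, add_comm]
  exact (hasSum_sinh x).add hcosh

end Real

theorem tsum_le_of_nonneg_of_le_of_hasSum {ι : Type*} {f g : ι → ℝ} {a : ℝ}
    (hf : ∀ i, 0 ≤ f i) (hfg : ∀ i, f i ≤ g i) (hg : HasSum g a) : ∑' i, f i ≤ a :=
  hg.tsum_eq ▸ (hg.summable.of_nonneg_of_le hf hfg).tsum_le_tsum hfg hg.summable

theorem pow_div_factorial_mul_factorial_le {x : ℝ} (hx : 0 < x) (k : ℕ) :
    (x / 2) ^ (2 * (k + 1)) / ((k + 1)! * k !) ≤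
      √x / 4 * (x ^ (2 * k + 1) / (2 * k + 1)! + x ^ (2 * (k + 1)) / (2 * (k + 1))!) := by
  have hC : ((2 * (k + 1))! : ℝ) = centralBinom (k + 1) * (k + 1)! * (k + 1)! := by
    rw [centralBinom_eq_two_mul_choose, two_mul, ← add_choose_mul_factorial_mul_factorial]
    push_cast; ring
  have hC0 : (0 : ℝ) < centralBinom (k + 1) := by exact_mod_cast centralBinom_pos _
  have h4 : ((4 : ℝ) ^ (k + 1)) ^ 2 = 16 ^ (k + 1) := by
    rw [← pow_mul, mul_comm, pow_mul]; norm_num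
  have h2 : (2 : ℝ) ^ (2 * (k + 1)) = 4 ^ (k + 1) := by rw [pow_mul]; norm_num
  set c : ℝ := centralBinom (k + 1) / 4 ^ (k + 1)
  have hWallis : (2 * k + 3) * c ^ 2 ≤ 1 := by
    rw [div_pow, mul_div_assoc', div_le_one (by positivity), h4]
    exact_mod_cast (by linarith [two_mul_add_one_mul_centralBinom_sq_le (k + 1)] :
      (2 * k + 3) * centralBinom (k + 1) ^ 2 ≤ 16 ^ (k + 1))
  obtain ⟨y, hy, rfl⟩ : ∃ y, 0 < y ∧ x = y ^ 2 :=
    ⟨√x, sqrt_pos.2 hx, (sq_sqrt hx.le).symm⟩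
  have amgm : (k + 1) * c * y ≤ (k + 1) / 2 + y ^ 2 / 4 := by
    nlinarith [sq_nonneg (y / 2 - (k + 1) * c)]
  calc (y ^ 2 / 2) ^ (2 * (k + 1)) / ((k + 1)! * k !)
      = (k + 1) * c * y * (y * (y ^ 2) ^ (2 * k + 1) / (2 * (k + 1))!) := by
        rw [div_pow, h2, hC, factorial_succ k]
        simp only [c]
        push_cast
        field_simp
        ring
    _ ≤ ((k + 1) / 2 + y ^ 2 / 4) * (y * (y ^ 2) ^ (2 * k + 1) / (2 * (k + 1))!) := by gcongr
    _ = _ := by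
        rw [sqrt_sq hy.le, show 2 * (k + 1) = 2 * k + 1 + 1 by ring, factorial_succ (2 * k + 1)]
        push_cast
        field_simp
        ring

noncomputable def besselIReduced (p x : ℝ) : ℝ :=
  ∑' k : ℕ, (x / 2) ^ (2 * k) / (k ! * Gamma (k + p + 1))

theorem besselI_eq_rpow_mul_besselIReduced (p : ℝ) {x : ℝ} (hx : 0 < x) :
    besselI p x = (x / 2) ^ p * besselIReduced p x := by
  rw [besselI, besselIReduced, ← tsum_mul_left]
  congr 1 with k
  rw [show 2 * (k : ℝ) + p = p + (2 * k : ℕ) by push_cast; ring,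
    rpow_add (by positivity), rpow_natCast, mul_div_assoc]

theorem besselI_nonneg {p x : ℝ} (hp : -1 < p) (hx : 0 ≤ x) : 0 ≤ besselI p x :=
  tsum_nonneg fun k ↦ div_nonneg (rpow_nonneg (by positivity) _)
    (mul_nonneg (by positivity) (Gamma_nat_add_add_one_pos hp k).le)

theorem besselIReduced_nonneg {p : ℝ} (hp : -1 < p) (x : ℝ) : 0 ≤ besselIReduced p x :=
  tsum_nonneg fun k ↦ by
    have := Gamma_nat_add_add_one_pos hp k
    rw [pow_mul]
    positivity

theorem besselIReduced_le_cosh {p : ℝ} (hp : -1 / 2 ≤ p) (x : ℝ) :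
    besselIReduced p x ≤ cosh x / Gamma (p + 1) := by
  have hΓ : 0 < Gamma (p + 1) := Gamma_pos_of_pos (by linarith)
  refine tsum_le_of_nonneg_of_le_of_hasSum (fun k ↦ ?_) (fun k ↦ ?_)
    ((hasSum_cosh x).div_const (Gamma (p + 1)))
  · have := Gamma_nat_add_add_one_pos (p := p) (by linarith) k
    rw [pow_mul]
    positivity
  · have := Gamma_nat_add_add_one_pos (p := p) (by linarith) k
    rw [div_div, div_pow, pow_mul 2, div_div, show (2 : ℝ) ^ 2 = 4 by norm_num, ← mul_assoc]
    refine div_le_div_of_nonneg_left (by rw [pow_mul]; positivity) (by positivity) ?_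
    exact factorial_two_mul_mul_Gamma_le hp k

theorem besselIReduced_le {p x : ℝ} (hp : -1 < p) (hx : 0 < x) :
    besselIReduced p x ≤ 1 / Gamma (p + 1) + √x / 4 * exp x / Gamma (p + 2) := by
  set f : ℕ → ℝ := fun k ↦ (x / 2) ^ (2 * k) / (k ! * Gamma (k + p + 1))
  have hΓ : 0 < Gamma (p + 2) := Gamma_pos_of_pos (by linarith)
  have hf0 : ∀ k, 0 ≤ f k := fun k ↦ by
    have := Gamma_nat_add_add_one_pos hp k
    positivity
  have htail : ∀ k, f (k + 1) ≤ √x / 4 / Gamma (p + 2) *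
      (x ^ (2 * k + 1) / (2 * k + 1)! + x ^ (2 * (k + 1)) / (2 * (k + 1))!) := fun k ↦
    calc f (k + 1) ≤ (x / 2) ^ (2 * (k + 1)) / ((k + 1)! * k !) / Gamma (p + 2) := by
          simp only [f]
          rw [div_div, mul_assoc]
          gcongr
          rw [Nat.cast_succ, show (k : ℝ) + 1 + p + 1 = k + p + 2 by ring]
          exact factorial_mul_Gamma_le hp k
      _ ≤ _ := by
          rw [div_eq_mul_inv, div_eq_mul_inv _ (Gamma _), mul_right_comm]
          gcongr
          exact pow_div_factorial_mul_factorial_le hx k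
  have hsum := (hasSum_pow_div_factorial_odd_add_even_succ x).mul_left (√x / 4 / Gamma (p + 2))
  have hf : Summable f :=
    (summable_nat_add_iff 1).1 (hsum.summable.of_nonneg_of_le (fun k ↦ hf0 _) htail)
  have hf_zero : f 0 = 1 / Gamma (p + 1) := by simp [f]
  rw [besselIReduced, hf.tsum_eq_zero_add, hf_zero]
  grw [tsum_le_of_nonneg_of_le_of_hasSum (fun k ↦ hf0 (k + 1)) htail hsum]
  gcongr
  rw [div_mul_eq_mul_div]
  gcongr
  linarith

theorem besselI_mul_besselI_div_exp_le {H x : ℝ} (hH1 : 1 / 2 ≤ H) (hH2 : H < 1) (hx : 0 < x) :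
    besselI (H - 1) x * besselI (-H) x / exp (2 * x) ≤
      2 / (Gamma H * Gamma (1 - H)) * exp (-x) / x + 1 / (2 * Gamma H * Gamma (2 - H)) / √x := by
  have hΓ : 0 < Gamma H := Gamma_pos_of_pos (by linarith)
  have hΓ₁ : 0 < Gamma (1 - H) := Gamma_pos_of_pos (by linarith)
  have hΓ₂ : 0 < Gamma (2 - H) := Gamma_pos_of_pos (by linarith)
  have h₁ : besselIReduced (H - 1) x ≤ exp x / Gamma H := by
    have h := besselIReduced_le_cosh (p := H - 1) (by linarith) x
    rw [sub_add_cancel] at h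
    refine h.trans (div_le_div_of_nonneg_right ?_ hΓ.le)
    rw [← cosh_add_sinh]
    linarith [sinh_nonneg_iff.2 hx.le]
  have h₂ := besselIReduced_le (p := -H) (by linarith) hx
  rw [neg_add_eq_sub, show -H + 2 = 2 - H by ring] at h₂
  have := besselIReduced_nonneg (p := -H) (by linarith) x
  rw [besselI_eq_rpow_mul_besselIReduced _ hx, besselI_eq_rpow_mul_besselIReduced _ hx,
    mul_mul_mul_comm, ← rpow_add (by positivity), show H - 1 + -H = -1 by ring, rpow_neg_one,
    inv_div]
  calc 2 / x * (besselIReduced (H - 1) x * besselIReduced (-H) x) / exp (2 * x)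
      ≤ 2 / x * (exp x / Gamma H * (1 / Gamma (1 - H) + √x / 4 * exp x / Gamma (2 - H)))
          / exp (2 * x) := by gcongr
    _ = _ := by
      have hsx : √x * √x = x := mul_self_sqrt hx.le
      rw [two_mul, exp_add, exp_neg]
      field_simp
      linear_combination (4 * exp x * Gamma (1 - H)) * hsx

theorem tendsto_besselI_mul_besselI_div_exp {H : ℝ} (hH1 : 1 / 2 ≤ H) (hH2 : H < 1) :
    Tendsto (fun x ↦ besselI (H - 1) x * besselI (-H) x / exp (2 * x)) atTop (𝓝 0) := by
  have hbound : Tendsto (fun x ↦ 2 / (Gamma H * Gamma (1 - H)) * exp (-x) / x +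
      1 / (2 * Gamma H * Gamma (2 - H)) / √x) atTop (𝓝 0) := by
    have h₁ := (tendsto_exp_neg_atTop_nhds_zero.const_mul (2 / (Gamma H * Gamma (1 - H)))).mul
      tendsto_inv_atTop_zero
    have h₂ := (tendsto_inv_atTop_zero.comp tendsto_sqrt_atTop).const_mul
      (1 / (2 * Gamma H * Gamma (2 - H)))
    simpa [div_eq_mul_inv] using h₁.add h₂
  refine squeeze_zero' ?_ ?_ hbound
  · filter_upwards [eventually_gt_atTop 0] with x hx
    have := besselI_nonneg (p := H - 1) (by linarith) hx.le
    have := besselI_nonneg (p := -H) (by linarith) hx.le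
    positivity
  · filter_upwards [eventually_gt_atTop 0] with x hx
    exact besselI_mul_besselI_div_exp_le hH1 hH2 hx

/-- Lemma A.1 asymptotics: for `H ∈ [1/2,1)` and `T > 0`,
`μ * (2 + 2e^{μT}(1-μT) - (πμT/sin(πH)) I_{H-1}(μT/2) I_{-H}(μT/2)) / (4μ²e^{μT}) → -T/2`
as `μ → +∞`. -/
theorem laplace_transform_derivative_asymptotics (H T : ℝ)
    (hH1 : 1 / 2 ≤ H) (hH2 : H < 1) (hT : 0 < T) :
    Tendsto
      (fun μ : ℝ => μ *
        ((2 + 2 * Real.exp (μ * T) * (1 - μ * T) -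
            Real.pi * μ * T / Real.sin (Real.pi * H) *
              besselI (H - 1) (μ * T / 2) * besselI (-H) (μ * T / 2)) /
          (4 * μ ^ 2 * Real.exp (μ * T))))
      atTop (nhds (-(T / 2))) := by
  have hμT : Tendsto (fun μ ↦ μ * T) atTop atTop := tendsto_id.atTop_mul_const hT
  have hinv : Tendsto (fun μ : ℝ ↦ (2 * μ)⁻¹) atTop (𝓝 0) :=
    tendsto_inv_atTop_zero.comp (tendsto_id.const_mul_atTop two_pos)
  have hexp := tendsto_exp_neg_atTop_nhds_zero.comp hμT
  have hbessel := (tendsto_besselI_mul_besselI_div_exp hH1 hH2).comp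
    (hμT.atTop_div_const two_pos)
  have hlim := (((hexp.const_add 1).mul hinv).sub_const (T / 2)).sub
    (hbessel.const_mul (π * T / (4 * sin (π * H))))
  simp only [mul_zero, sub_zero, zero_sub] at hlim
  refine hlim.congr' ?_
  filter_upwards [eventually_gt_atTop 0] with μ hμ
  simp only [Function.comp_apply]
  rw [show 2 * (μ * T / 2) = μ * T by ring, exp_neg]
  field_simp
  ring
end
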